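/- arXiv:1408.0308 — 2 statements merged into one kernel-verified Lean document; each statement's English description precedes it below -/
import Mathlib

section
/- Let A be a row-stochastic n×n matrix having a column k with all entries at least δ > 0. Then for any x ∈ ℝ^n, the spread of Ax satisfies max_i (Ax)_i - min_i (Ax)_i ≤ (1-δ)(max_i x_i - min_i x_i). -/
def RowStochastic {n : ℕ} (A : Matrix (Fin n) (Fin n) ℝ) : Prop :=
  (∀ i j, 0 ≤ A i j) ∧ ∀ i, ∑ j, A i j = 1

/-!
Split off the guaranteed mass `δ` on column `k`: each row of `A` is `δ • e_k` plus a nonnegative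
vector of total mass `1 - δ`. Hence every entry of `A x` lies in
`[δ x_k + (1 - δ) min x, δ x_k + (1 - δ) max x]`, an interval of length `(1 - δ)(max x - min x)`.
-/

open Matrix

section

variable {ι : Type*} [Fintype ι] [DecidableEq ι]

omit [DecidableEq ι] in
theorem dotProduct_le_sum_mul_of_nonneg {v x : ι → ℝ} {M : ℝ} (hv : ∀ j, 0 ≤ v j)
    (hx : ∀ j, x j ≤ M) : v ⬝ᵥ x ≤ (∑ j, v j) * M := by
  rw [Finset.sum_mul]
  exact Finset.sum_le_sum fun j _ => mul_le_mul_of_nonneg_left (hx j) (hv j)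

theorem dotProduct_le_of_le_apply {w x : ι → ℝ} {k : ι} {δ M : ℝ} (hw : ∀ j, 0 ≤ w j)
    (hsum : ∑ j, w j = 1) (hk : δ ≤ w k) (hx : ∀ j, x j ≤ M) :
    w ⬝ᵥ x ≤ δ * x k + (1 - δ) * M := by
  set v := w - Pi.single k δ
  have hv : ∀ j, 0 ≤ v j := by
    intro j
    by_cases hj : j = k
    · subst hj; simpa [v] using hk
    · simpa [v, hj] using hw j
  have hv_sum : ∑ j, v j = 1 - δ := by
    simp only [v, Pi.sub_apply, Finset.sum_sub_distrib, hsum, Finset.sum_pi_single',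
      Finset.mem_univ, if_true]
  have hw_split : w = v + Pi.single k δ := (sub_add_cancel w _).symm
  calc w ⬝ᵥ x = v ⬝ᵥ x + δ * x k := by rw [hw_split, add_dotProduct, single_dotProduct]
    _ ≤ (1 - δ) * M + δ * x k := by
      grw [dotProduct_le_sum_mul_of_nonneg hv hx, hv_sum]
    _ = δ * x k + (1 - δ) * M := add_comm _ _

theorem le_dotProduct_of_le_apply {w x : ι → ℝ} {k : ι} {δ m : ℝ} (hw : ∀ j, 0 ≤ w j)
    (hsum : ∑ j, w j = 1) (hk : δ ≤ w k) (hx : ∀ j, m ≤ x j) :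
    δ * x k + (1 - δ) * m ≤ w ⬝ᵥ x := by
  have := dotProduct_le_of_le_apply (x := -x) (M := -m) hw hsum hk (fun j => neg_le_neg (hx j))
  simp only [dotProduct_neg, Pi.neg_apply] at this
  linarith

end

theorem stmt_9_general {n : ℕ} (hne : (Finset.univ : Finset (Fin n)).Nonempty)
    (A : Matrix (Fin n) (Fin n) ℝ) (hA : RowStochastic A)
    (δ : ℝ) (k : Fin n) (hcol : ∀ i, δ ≤ A i k)
    (x : Fin n → ℝ) :
    Finset.univ.sup' hne (A.mulVec x) - Finset.univ.inf' hne (A.mulVec x) ≤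
      (1 - δ) * (Finset.univ.sup' hne x - Finset.univ.inf' hne x) := by
  obtain ⟨hpos, hrow⟩ := hA
  have hsup : Finset.univ.sup' hne (A.mulVec x) ≤
      δ * x k + (1 - δ) * Finset.univ.sup' hne x :=
    Finset.sup'_le hne _ fun i _ => dotProduct_le_of_le_apply (hpos i) (hrow i) (hcol i)
      fun j => Finset.le_sup' x (Finset.mem_univ j)
  have hinf : δ * x k + (1 - δ) * Finset.univ.inf' hne x ≤
      Finset.univ.inf' hne (A.mulVec x) :=
    Finset.le_inf' hne _ fun i _ => le_dotProduct_of_le_apply (hpos i) (hrow i) (hcol i)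
      fun j => Finset.inf'_le x (Finset.mem_univ j)
  linarith

theorem stmt_9 {n : ℕ} (hne : (Finset.univ : Finset (Fin n)).Nonempty)
    (A : Matrix (Fin n) (Fin n) ℝ) (hA : RowStochastic A)
    (δ : ℝ) (hδ : 0 < δ) (k : Fin n) (hcol : ∀ i, δ ≤ A i k)
    (x : Fin n → ℝ) :
    Finset.univ.sup' hne (A.mulVec x) - Finset.univ.inf' hne (A.mulVec x) ≤
      (1 - δ) * (Finset.univ.sup' hne x - Finset.univ.inf' hne x) :=
  stmt_9_general hne A hA δ k hcol x
end

section
/- If A is row-stochastic and for some t₀ the power A^{t₀} has a strictly positive column, then for every initial opinion vector x(0), the sequence x(t) = A^t x(0) converges, and its limit is a consensus vector (all entries equal). -/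
/-!
A row-stochastic matrix replaces each opinion by a convex combination of opinions, so along the
trajectory the largest opinion never increases and the smallest never decreases. If every row of
`A ^ t₀` gives weight at least `δ > 0` to agent `k`, then `t₀` steps move every opinion at least a
fraction `δ` of the way from the extreme values towards the opinion of `k`, so the spread
`max - min` shrinks by the factor `1 - δ` and decays geometrically. The monotone minimum and the antitone maximum then squeeze every coordinate to a
common limit.
-/

open Filter

open Topology Matrix Set

lemma RowStochastic.mem_rowStochastic {n : ℕ} {A : Matrix (Fin n) (Fin n) ℝ}
    (hA : RowStochastic A) : A ∈ rowStochastic ℝ (Fin n) :=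
  mem_rowStochastic_iff_sum.2 hA

lemma tendsto_zero_of_antitone_of_le_geometric {f : ℕ → ℝ} (hf : Antitone f)
    (hf0 : ∀ t, 0 ≤ f t) {r C : ℝ} (hr0 : 0 ≤ r) (hr1 : r < 1) (N : ℕ)
    (hN : ∀ s, f (s * N) ≤ r ^ s * C) : Tendsto f atTop (𝓝 0) := by
  have hbdd : BddBelow (range f) := ⟨0, forall_mem_range.2 hf0⟩
  have hgeom : Tendsto (fun s : ℕ => r ^ s * C) atTop (𝓝 0) := by
    simpa using (tendsto_pow_atTop_nhds_zero_of_lt_one hr0 hr1).mul_const C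
  have hinf : ⨅ t, f t = 0 :=
    le_antisymm (ge_of_tendsto' hgeom fun s => (ciInf_le hbdd _).trans (hN s)) (le_ciInf hf0)
  simpa [hinf] using tendsto_atTop_ciInf hf hbdd

section Spread

variable {ι : Type*} [Fintype ι]

lemma exists_tendsto_const_of_iSup_sub_iInf_tendsto_zero [Nonempty ι] {u : ℕ → ι → ℝ}
    (hsup : Antitone fun t => ⨆ i, u t i) (hinf : Monotone fun t => ⨅ i, u t i)
    (hspread : Tendsto (fun t => (⨆ i, u t i) - ⨅ i, u t i) atTop (𝓝 0)) :
    ∃ c : ℝ, Tendsto u atTop (𝓝 fun _ => c) := by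
  have hbdd : BddAbove (range fun t => ⨅ i, u t i) :=
    ⟨⨆ i, u 0 i, forall_mem_range.2 fun t =>
      (ciInf_le_ciSup (Finite.bddBelow_range _) (Finite.bddAbove_range _)).trans
        (hsup (Nat.zero_le t))⟩
  have hmin := tendsto_atTop_ciSup hinf hbdd
  have hmax : Tendsto (fun t => ⨆ i, u t i) atTop (𝓝 (⨆ t, ⨅ i, u t i)) := by
    simpa using hspread.add hmin
  exact ⟨_, tendsto_pi_nhds.2 fun i => tendsto_of_tendsto_of_tendsto_of_le_of_le hmin hmax
    (fun t => ciInf_le (Finite.bddBelow_range _) i)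
    (fun t => le_ciSup (Finite.bddAbove_range _) i)⟩

variable [DecidableEq ι] {M : Matrix ι ι ℝ} {v : ι → ℝ}

lemma mulVec_apply_le_sub_of_mem_rowStochastic (hM : M ∈ rowStochastic ℝ ι) {S : ℝ}
    (hv : ∀ j, v j ≤ S) (i k : ι) : (M *ᵥ v) i ≤ S - M i k * (S - v k) := by
  have hsum : ∑ j, M i j * (S - v j) = S - (M *ᵥ v) i := by
    simp [mulVec, dotProduct, mul_sub, Finset.sum_sub_distrib, ← Finset.sum_mul,
      sum_row_of_mem_rowStochastic hM]
  have hk := Finset.single_le_sum (f := fun j => M i j * (S - v j))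
    (fun j _ => mul_nonneg (nonneg_of_mem_rowStochastic hM) (sub_nonneg.2 (hv j)))
    (Finset.mem_univ k)
  linarith

lemma add_le_mulVec_apply_of_mem_rowStochastic (hM : M ∈ rowStochastic ℝ ι) {m : ℝ}
    (hv : ∀ j, m ≤ v j) (i k : ι) : m + M i k * (v k - m) ≤ (M *ᵥ v) i := by
  have := mulVec_apply_le_sub_of_mem_rowStochastic hM (v := -v) (S := -m)
    (fun j => neg_le_neg (hv j)) i k
  simp only [mulVec_neg, Pi.neg_apply] at this
  linarith

variable [Nonempty ι]

lemma iSup_mulVec_le_of_mem_rowStochastic (hM : M ∈ rowStochastic ℝ ι) (v : ι → ℝ) :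
    ⨆ i, (M *ᵥ v) i ≤ ⨆ i, v i := by
  have hv j : v j ≤ ⨆ i, v i := le_ciSup (Finite.bddAbove_range v) j
  refine ciSup_le fun i => (mulVec_apply_le_sub_of_mem_rowStochastic hM hv i i).trans ?_
  exact sub_le_self _ (mul_nonneg (nonneg_of_mem_rowStochastic hM) (sub_nonneg.2 (hv i)))

lemma iInf_le_iInf_mulVec_of_mem_rowStochastic (hM : M ∈ rowStochastic ℝ ι) (v : ι → ℝ) :
    ⨅ i, v i ≤ ⨅ i, (M *ᵥ v) i := by
  have hv j : ⨅ i, v i ≤ v j := ciInf_le (Finite.bddBelow_range v) j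
  refine le_ciInf fun i => le_trans ?_ (add_le_mulVec_apply_of_mem_rowStochastic hM hv i i)
  exact le_add_of_nonneg_right (mul_nonneg (nonneg_of_mem_rowStochastic hM) (sub_nonneg.2 (hv i)))

lemma iSup_sub_iInf_mulVec_le_of_mem_rowStochastic (hM : M ∈ rowStochastic ℝ ι) {δ : ℝ}
    {k : ι} (hδ : ∀ i, δ ≤ M i k) (v : ι → ℝ) :
    (⨆ i, (M *ᵥ v) i) - ⨅ i, (M *ᵥ v) i ≤ (1 - δ) * ((⨆ i, v i) - ⨅ i, v i) := by
  set S := ⨆ i, v i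
  set m := ⨅ i, v i
  have hS j : v j ≤ S := le_ciSup (Finite.bddAbove_range v) j
  have hm j : m ≤ v j := ciInf_le (Finite.bddBelow_range v) j
  have hmax : ⨆ i, (M *ᵥ v) i ≤ S - δ * (S - v k) := ciSup_le fun i =>
    (mulVec_apply_le_sub_of_mem_rowStochastic hM hS i k).trans
      (sub_le_sub_left (mul_le_mul_of_nonneg_right (hδ i) (sub_nonneg.2 (hS k))) S)
  have hmin : m + δ * (v k - m) ≤ ⨅ i, (M *ᵥ v) i := le_ciInf fun i =>
    (add_le_add_right (mul_le_mul_of_nonneg_right (hδ i) (sub_nonneg.2 (hm k))) m).trans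
      (add_le_mulVec_apply_of_mem_rowStochastic hM hm i k)
  linarith

lemma antitone_iSup_pow_mulVec (hM : M ∈ rowStochastic ℝ ι) (x : ι → ℝ) :
    Antitone fun t : ℕ => ⨆ i, (M ^ t *ᵥ x) i :=
  antitone_nat_of_succ_le fun t => by
    simpa only [pow_succ', ← mulVec_mulVec] using iSup_mulVec_le_of_mem_rowStochastic hM _

lemma monotone_iInf_pow_mulVec (hM : M ∈ rowStochastic ℝ ι) (x : ι → ℝ) :
    Monotone fun t : ℕ => ⨅ i, (M ^ t *ᵥ x) i :=
  monotone_nat_of_le_succ fun t => by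
    simpa only [pow_succ', ← mulVec_mulVec] using iInf_le_iInf_mulVec_of_mem_rowStochastic hM _

lemma iSup_sub_iInf_pow_mul_mulVec_le (hM : M ∈ rowStochastic ℝ ι) {N : ℕ} {δ : ℝ} {k : ι}
    (hδ : ∀ i, δ ≤ (M ^ N) i k) (x : ι → ℝ) (s : ℕ) :
    (⨆ i, (M ^ (s * N) *ᵥ x) i) - ⨅ i, (M ^ (s * N) *ᵥ x) i
      ≤ (1 - δ) ^ s * ((⨆ i, x i) - ⨅ i, x i) := by
  have hδ1 : δ ≤ 1 := (hδ k).trans (le_one_of_mem_rowStochastic (pow_mem hM N))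
  induction s with
  | zero => simp
  | succ s ih =>
    rw [Nat.succ_mul, add_comm, pow_add, ← mulVec_mulVec, pow_succ, mul_comm _ (1 - δ), mul_assoc]
    exact (iSup_sub_iInf_mulVec_le_of_mem_rowStochastic (pow_mem hM N) hδ _).trans
      (mul_le_mul_of_nonneg_left ih (sub_nonneg.2 hδ1))

end Spread

theorem stmt_10 {n : ℕ} (A : Matrix (Fin n) (Fin n) ℝ) (hA : RowStochastic A)
    (t₀ : ℕ) (k : Fin n) (hcol : ∀ i, 0 < (A ^ t₀) i k) :
    ∀ x : Fin n → ℝ, ∃ c : ℝ,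
      Tendsto (fun t => (A ^ t).mulVec x) atTop (nhds (fun _ => c)) := by
  intro x
  have : Nonempty (Fin n) := ⟨k⟩
  have hM := hA.mem_rowStochastic
  obtain ⟨i₀, hδ⟩ := Finite.exists_min fun i => (A ^ t₀) i k
  have hδ1 : (A ^ t₀) i₀ k ≤ 1 := le_one_of_mem_rowStochastic (pow_mem hM t₀)
  refine exists_tendsto_const_of_iSup_sub_iInf_tendsto_zero (antitone_iSup_pow_mulVec hM x)
    (monotone_iInf_pow_mulVec hM x) ?_
  exact tendsto_zero_of_antitone_of_le_geometric
    (fun s t hst => sub_le_sub (antitone_iSup_pow_mulVec hM x hst)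
      (monotone_iInf_pow_mulVec hM x hst))
    (fun t => sub_nonneg.2 (ciInf_le_ciSup (Finite.bddBelow_range _) (Finite.bddAbove_range _)))
    (sub_nonneg.2 hδ1) (sub_lt_self 1 (hcol i₀)) t₀ (iSup_sub_iInf_pow_mul_mulVec_le hM hδ x)
end
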